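/- arXiv:2508.20512 — 3 statements merged into one kernel-verified Lean document; each statement's English description precedes it below -/
import Mathlib

section
/- Let S₁, S₂, S₃ be Hermitian operators with [S_α, S_β] = i ∑_γ ε_{αβγ} S_γ, pairwise Hilbert–Schmidt orthogonal with common normalized Frobenius norm c = ‖S_α‖. Set H_c^f = C_H S₁ and ρ_c^i = C_ρ (S₁ cos φ + S₂ sin φ) with C_H, C_ρ > 0 and φ ∈ [0,π]. Then for H := S₃/c and any T with ωT/c ∈ (0, π−φ], the self-consistency identity −i[H_c^f, e^{−iωT H} ρ_c^i e^{iωT H}] = C·H holds with scalar C = c C_H C_ρ sin(ωT/c + φ) ≥ 0. -/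
open Matrix

/-- Normalized Frobenius norm. -/
noncomputable def nfrob {D : ℕ} (M : Matrix (Fin D) (Fin D) ℂ) : ℝ :=
  Real.sqrt (((Mᴴ * M).trace).re / D)

/-- `evol M t = e^{-itM}`. -/
noncomputable def evol {D : ℕ} (M : Matrix (Fin D) (Fin D) ℂ) (t : ℝ) :
    Matrix (Fin D) (Fin D) ℂ :=
  NormedSpace.exp ((((-t : ℝ) : ℂ) * Complex.I) • M)

/-!
The combinations `S₁ ± i S₂` are eigenvectors of `[S₃, ·]` with eigenvalues `±1`, so conjugation
by `e^{-iθS₃}` multiplies them by `e^{∓iθ}`: it rotates the `(S₁, S₂)`-plane by `θ`. Hence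
`e^{-iωTH} ρ e^{iωTH} = C_ρ (S₁ cos (θ + φ) + S₂ sin (θ + φ))` with `θ = ωT/c`, and its commutator
with `S₁` is `i sin (θ + φ) S₃`. Nonnegativity of the constant is `θ + φ ∈ [0, π]`.
-/

open NormedSpace
open Complex (I)

theorem exp_mul_mul_exp_neg_of_commutator_eq_smul {𝔸 : Type*} [NormedRing 𝔸]
    [NormedAlgebra ℂ 𝔸] [CompleteSpace 𝔸] {A B : 𝔸} {l : ℂ} (h : A * B - B * A = l • B) :
    exp A * B * exp (-A) = Complex.exp l • B := by
  let : NormedAlgebra ℚ 𝔸 := NormedAlgebra.restrictScalars ℚ ℂ 𝔸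
  have hsemi : SemiconjBy B (A + l • 1) A := by
    rw [SemiconjBy, mul_add, mul_smul_one, ← sub_eq_iff_eq_add'.mp h]
  have hexp : exp (A + l • (1 : 𝔸)) = Complex.exp l • exp A := by
    rw [exp_add_of_commute ((Commute.one_right A).smul_right l), ← Algebra.algebraMap_eq_smul_one,
      ← algebraMap_exp_comm, Complex.exp_eq_exp_ℂ, Algebra.algebraMap_eq_smul_one, mul_smul_one]
  have hinv : exp A * exp (-A) = 1 := by
    rw [← exp_add_of_commute (Commute.refl A).neg_right, add_neg_cancel, NormedSpace.exp_zero]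
  rw [← hsemi.exp_right.eq, hexp, mul_smul_comm, smul_mul_assoc, mul_assoc, hinv, mul_one]

theorem ofReal_cos_smul_add_ofReal_sin_smul {M : Type*} [AddCommGroup M] [Module ℂ M]
    (X Y : M) (ψ : ℝ) :
    (Real.cos ψ : ℂ) • X + (Real.sin ψ : ℂ) • Y =
      (Complex.exp (-ψ * I) / 2) • (X + I • Y) + (Complex.exp (ψ * I) / 2) • (X - I • Y) := by
  rw [Complex.ofReal_cos, Complex.ofReal_sin, Complex.cos, Complex.sin]
  match_scalars <;> ring

section Ladder

variable {𝔸 : Type*} [Ring 𝔸] [Algebra ℂ 𝔸] {X Y Z : 𝔸}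

theorem commutator_add_I_smul (hZX : Z * X - X * Z = I • Y) (hYZ : Y * Z - Z * Y = I • X) :
    Z * (X + I • Y) - (X + I • Y) * Z = X + I • Y := by
  calc Z * (X + I • Y) - (X + I • Y) * Z = (Z * X - X * Z) - I • (Y * Z - Z * Y) := by
        simp only [mul_add, add_mul, mul_smul_comm, smul_mul_assoc, smul_sub]; abel
    _ = X + I • Y := by
        rw [hZX, hYZ, smul_smul, Complex.I_mul_I, neg_one_smul, sub_neg_eq_add, add_comm]

theorem commutator_sub_I_smul (hZX : Z * X - X * Z = I • Y) (hYZ : Y * Z - Z * Y = I • X) :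
    Z * (X - I • Y) - (X - I • Y) * Z = -(X - I • Y) := by
  calc Z * (X - I • Y) - (X - I • Y) * Z = (Z * X - X * Z) + I • (Y * Z - Z * Y) := by
        simp only [mul_sub, sub_mul, mul_smul_comm, smul_mul_assoc, smul_sub]; abel
    _ = -(X - I • Y) := by rw [hZX, hYZ, smul_smul, Complex.I_mul_I, neg_one_smul]; abel

theorem commutator_cos_smul_add_sin_smul (hXY : X * Y - Y * X = I • Z) (ψ : ℝ) :
    X * ((Real.cos ψ : ℂ) • X + (Real.sin ψ : ℂ) • Y) -
        ((Real.cos ψ : ℂ) • X + (Real.sin ψ : ℂ) • Y) * X = ((Real.sin ψ : ℂ) * I) • Z := by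
  calc _ = (Real.sin ψ : ℂ) • (X * Y - Y * X) := by
        simp only [mul_add, add_mul, mul_smul_comm, smul_mul_assoc, smul_sub]; abel
    _ = ((Real.sin ψ : ℂ) * I) • Z := by rw [hXY, smul_smul]

end Ladder

section Rotation

variable {𝔸 : Type*} [NormedRing 𝔸] [NormedAlgebra ℂ 𝔸] [CompleteSpace 𝔸] {X Y Z : 𝔸}

theorem exp_mul_cos_smul_add_sin_smul_mul_exp (hZX : Z * X - X * Z = I • Y)
    (hYZ : Y * Z - Z * Y = I • X) (θ φ : ℝ) :
    exp ((-θ * I) • Z) * ((Real.cos φ : ℂ) • X + (Real.sin φ : ℂ) • Y) * exp ((θ * I) • Z) =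
      (Real.cos (θ + φ) : ℂ) • X + (Real.sin (θ + φ) : ℂ) • Y := by
  have hneg : (θ * I : ℂ) • Z = -((-θ * I) • Z) := by rw [neg_mul, neg_smul, neg_neg]
  have hraise : exp ((-θ * I) • Z) * (X + I • Y) * exp ((θ * I) • Z) =
      Complex.exp (-θ * I) • (X + I • Y) := by
    rw [hneg]
    refine exp_mul_mul_exp_neg_of_commutator_eq_smul ?_
    rw [smul_mul_assoc, mul_smul_comm, ← smul_sub, commutator_add_I_smul hZX hYZ]
  have hlower : exp ((-θ * I) • Z) * (X - I • Y) * exp ((θ * I) • Z) =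
      Complex.exp (θ * I) • (X - I • Y) := by
    rw [hneg]
    refine exp_mul_mul_exp_neg_of_commutator_eq_smul ?_
    rw [smul_mul_assoc, mul_smul_comm, ← smul_sub, commutator_sub_I_smul hZX hYZ, smul_neg,
      ← neg_smul, neg_mul, neg_neg]
  rw [ofReal_cos_smul_add_ofReal_sin_smul, ofReal_cos_smul_add_ofReal_sin_smul]
  rw [mul_add, add_mul, mul_smul_comm, smul_mul_assoc, mul_smul_comm, smul_mul_assoc, hraise,
    hlower, smul_smul, smul_smul, div_mul_eq_mul_div, div_mul_eq_mul_div, ← Complex.exp_add,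
    ← Complex.exp_add]
  congr 4 <;> push_cast <;> ring

end Rotation

-- Matrices carry no canonical norm, but `exp` does not depend on the choice of one.
theorem Matrix.exp_mul_cos_smul_add_sin_smul_mul_exp {n : Type*} [Fintype n] [DecidableEq n]
    {X Y Z : Matrix n n ℂ} (hZX : Z * X - X * Z = I • Y) (hYZ : Y * Z - Z * Y = I • X)
    (θ φ : ℝ) :
    exp ((-θ * I) • Z) * ((Real.cos φ : ℂ) • X + (Real.sin φ : ℂ) • Y) * exp ((θ * I) • Z) =
      (Real.cos (θ + φ) : ℂ) • X + (Real.sin (θ + φ) : ℂ) • Y :=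
  let _ : NormedRing (Matrix n n ℂ) := Matrix.linftyOpNormedRing
  let _ : NormedAlgebra ℂ (Matrix n n ℂ) := Matrix.linftyOpNormedAlgebra
  _root_.exp_mul_cos_smul_add_sin_smul_mul_exp hZX hYZ θ φ

theorem evol_ofReal_smul {D : ℕ} (M : Matrix (Fin D) (Fin D) ℂ) (r t : ℝ) :
    evol ((r : ℂ) • M) t = exp ((-(r * t : ℝ) * I) • M) := by
  rw [evol, smul_smul]
  congr 2
  push_cast
  ring

theorem stmt_9_general (D : ℕ) (S : Fin 3 → Matrix (Fin D) (Fin D) ℂ)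
    (hc01 : S 0 * S 1 - S 1 * S 0 = Complex.I • S 2)
    (hc12 : S 1 * S 2 - S 2 * S 1 = Complex.I • S 0)
    (hc20 : S 2 * S 0 - S 0 * S 2 = Complex.I • S 1)
    (c : ℝ) (hc : 0 < c)
    (CH Cρ ω T φ : ℝ) (hCH : 0 < CH) (hCρ : 0 < Cρ)
    (hφ : φ ∈ Set.Icc 0 Real.pi)
    (hT : ω * T / c ∈ Set.Ioc 0 (Real.pi - φ))
    (Hf ρ Hop : Matrix (Fin D) (Fin D) ℂ)
    (hHf : Hf = (CH : ℂ) • S 0)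
    (hρ : ρ = (Cρ : ℂ) • (((Real.cos φ : ℝ) : ℂ) • S 0 + ((Real.sin φ : ℝ) : ℂ) • S 1))
    (hHop : Hop = ((c⁻¹ : ℝ) : ℂ) • S 2) :
    (-Complex.I) • (Hf * (evol Hop (ω * T) * ρ * evol Hop (-(ω * T))) -
        (evol Hop (ω * T) * ρ * evol Hop (-(ω * T))) * Hf)
      = ((c * CH * Cρ * Real.sin (ω * T / c + φ) : ℝ) : ℂ) • Hop ∧
      0 ≤ c * CH * Cρ * Real.sin (ω * T / c + φ) := by
  set θ := ω * T / c
  have hsin : 0 ≤ Real.sin (θ + φ) :=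
    Real.sin_nonneg_of_nonneg_of_le_pi (by linarith [hT.1, hφ.1]) (by linarith [hT.2])
  refine ⟨?_, by positivity⟩
  have hforward : evol Hop (ω * T) = exp ((-θ * I) • S 2) := by
    rw [hHop, evol_ofReal_smul, inv_mul_eq_div]
  have hbackward : evol Hop (-(ω * T)) = exp ((θ * I) • S 2) := by
    rw [hHop, evol_ofReal_smul, mul_neg, inv_mul_eq_div, Complex.ofReal_neg, neg_neg]
  have hrotate := Matrix.exp_mul_cos_smul_add_sin_smul_mul_exp hc20 hc12 θ φ
  have hcomm := commutator_cos_smul_add_sin_smul hc01 (θ + φ)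
  rw [hforward, hbackward, hρ, mul_smul_comm, smul_mul_assoc, hrotate, hHf, hHop]
  rw [smul_mul_assoc, mul_smul_comm, smul_mul_assoc, mul_smul_comm, smul_smul, smul_smul,
    mul_comm (Cρ : ℂ), ← smul_sub, hcomm]
  simp only [smul_smul]
  congr 1
  have hc0 : (c : ℂ) ≠ 0 := Complex.ofReal_ne_zero.mpr hc.ne'
  generalize Real.sin (θ + φ) = s
  push_cast
  field_simp
  linear_combination (-(CH * Cρ * s) : ℂ) * Complex.I_sq

/-- Explicit solution of the self-consistent equation for su(2) control:
with `H = S₃/c`, the identity `-i[H_c^f, e^{-iωTH} ρ_c^i e^{iωTH}] = C·H` holds,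
with `C = c·C_H·C_ρ·sin(ωT/c + φ) ≥ 0`. -/
theorem stmt_9 (D : ℕ) (S : Fin 3 → Matrix (Fin D) (Fin D) ℂ)
    (hH : ∀ α, (S α).IsHermitian)
    (hc01 : S 0 * S 1 - S 1 * S 0 = Complex.I • S 2)
    (hc12 : S 1 * S 2 - S 2 * S 1 = Complex.I • S 0)
    (hc20 : S 2 * S 0 - S 0 * S 2 = Complex.I • S 1)
    (horth : ∀ α β, α ≠ β → (S α * S β).trace = 0)
    (c : ℝ) (hc : 0 < c) (hnorm : ∀ α, nfrob (S α) = c)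
    (CH Cρ ω T φ : ℝ) (hCH : 0 < CH) (hCρ : 0 < Cρ) (hω : 0 < ω)
    (hφ : φ ∈ Set.Icc 0 Real.pi)
    (hT : ω * T / c ∈ Set.Ioc 0 (Real.pi - φ))
    (Hf ρ Hop : Matrix (Fin D) (Fin D) ℂ)
    (hHf : Hf = (CH : ℂ) • S 0)
    (hρ : ρ = (Cρ : ℂ) • (((Real.cos φ : ℝ) : ℂ) • S 0 + ((Real.sin φ : ℝ) : ℂ) • S 1))
    (hHop : Hop = ((c⁻¹ : ℝ) : ℂ) • S 2) :
    (-Complex.I) • (Hf * (evol Hop (ω * T) * ρ * evol Hop (-(ω * T))) -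
        (evol Hop (ω * T) * ρ * evol Hop (-(ω * T))) * Hf)
      = ((c * CH * Cρ * Real.sin (ω * T / c + φ) : ℝ) : ℂ) • Hop ∧
      0 ≤ c * CH * Cρ * Real.sin (ω * T / c + φ) :=
  stmt_9_general D S hc01 hc12 hc20 c hc CH Cρ ω T φ hCH hCρ hφ hT Hf ρ Hop hHf hρ hHop
end

section
/- Let ρ = |ψ_i⟩⟨ψ_i| be a pure state on ℂ² and |ψ_t⟩ a unit vector with |⟨ψ_t|ψ_i⟩| < 1. Then the minimum time T* such that some traceless Hermitian H with normalized Frobenius norm ‖H‖ = 1 achieves ⟨ψ_t| e^{−iωT*H} ρ e^{iωT*H} |ψ_t⟩ = 1 equals T* = ω^{−1} arccos|⟨ψ_t|ψ_i⟩|. -/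
open Matrix

/-!
An admissible control `H` (traceless, Hermitian, `‖H‖ = 1` on `ℂ²`) squares to `1`, so
`e^{-iθH} = cos θ - i sin θ H`; as `⟨ψ|H|ψ⟩` is real, `Re ⟨ψᵢ|e^{-iθH}|ψᵢ⟩ = cos θ`. Reaching `ψₜ`
forces `e^{-iθH} ψᵢ` to be a phase multiple of `ψₜ`, hence `cos θ ≤ |⟨ψₜ|ψᵢ⟩|` and
`θ ≥ arccos |⟨ψₜ|ψᵢ⟩|`. Conversely, the generator of the rotation in the plane spanned by `ψᵢ` and a
suitable phase multiple of `ψₜ` reaches `ψₜ` at exactly `θ = arccos |⟨ψₜ|ψᵢ⟩|`.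
-/

open NormedSpace Nat in
theorem exp_smul_of_mul_self_eq_one {A : Type*} [NormedRing A] [NormedAlgebra ℂ A]
    [CompleteSpace A] {x : A} (hx : x * x = 1) (z : ℂ) :
    exp (z • x) = Complex.cosh z • 1 + Complex.sinh z • x := by
  have hpow : ∀ n, x ^ (2 * n) = 1 := fun n => by rw [pow_mul, sq, hx, one_pow]
  refine (exp_series_hasSum_exp' (𝕂 := ℂ) (z • x)).unique (HasSum.even_add_odd ?_ ?_)
  · convert (Complex.hasSum_cosh z).smul_const (1 : A) using 2 with n
    rw [smul_pow, hpow, smul_smul, div_eq_inv_mul]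
  · convert (Complex.hasSum_sinh z).smul_const x using 2 with n
    rw [smul_pow, pow_succ x, hpow, one_mul, smul_smul, div_eq_inv_mul]

section evol

variable {D : ℕ} {H : Matrix (Fin D) (Fin D) ℂ}

-- `NormedSpace.exp` does not depend on the norm; this one only supplies a Banach algebra structure.
open scoped Matrix.Norms.Operator in
theorem evol_eq_of_mul_self_eq_one (hH : H * H = 1) (t : ℝ) :
    evol H t = (Real.cos t : ℂ) • 1 - (Real.sin t * Complex.I : ℂ) • H := by
  refine (exp_smul_of_mul_self_eq_one hH _).trans ?_
  push_cast
  rw [neg_mul, Complex.cosh_neg, Complex.sinh_neg, Complex.cosh_mul_I, Complex.sinh_mul_I,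
    neg_smul, sub_eq_add_neg]

theorem conjTranspose_evol (hH : H.IsHermitian) (t : ℝ) : (evol H t)ᴴ = evol H (-t) := by
  rw [evol, evol, ← Matrix.exp_conjTranspose, conjTranspose_smul, hH.eq]
  congr 1
  simp [Complex.conj_ofReal]

theorem evol_mem_unitaryGroup (hH : H.IsHermitian) (t : ℝ) :
    evol H t ∈ unitaryGroup (Fin D) ℂ := by
  have hneg : evol H (-t) = NormedSpace.exp (-((((-t : ℝ) : ℂ) * Complex.I) • H)) := by
    rw [evol, ← neg_smul, ← neg_mul, ← Complex.ofReal_neg]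
  rw [mem_unitaryGroup_iff', star_eq_conjTranspose, conjTranspose_evol hH, hneg,
    Matrix.exp_neg, evol, nonsing_inv_mul]
  exact (isUnit_iff_isUnit_det _).mp (isUnit_exp _)

theorem re_star_dotProduct_evol_mulVec (hH : H.IsHermitian) (hH2 : H * H = 1)
    {ψ : Fin D → ℂ} (hψ : star ψ ⬝ᵥ ψ = 1) (t : ℝ) :
    (star ψ ⬝ᵥ evol H t *ᵥ ψ).re = Real.cos t := by
  have him : (star ψ ⬝ᵥ H *ᵥ ψ).im = 0 := hH.im_star_dotProduct_mulVec_self ψ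
  rw [evol_eq_of_mul_self_eq_one hH2, sub_mulVec, smul_mulVec, smul_mulVec, one_mulVec,
    dotProduct_sub, dotProduct_smul, dotProduct_smul, hψ]
  simp [him, Complex.cos_ofReal_re]

end evol

theorem Matrix.mul_self_eq_neg_det_smul_one_of_trace_eq_zero {R : Type*} [CommRing R]
    {A : Matrix (Fin 2) (Fin 2) R} (hA : A.trace = 0) : A * A = -A.det • 1 := by
  rw [trace_fin_two] at hA
  have h11 : A 1 1 = -A 0 0 := by linear_combination hA
  ext i j
  fin_cases i <;> fin_cases j <;> simp [mul_apply, det_fin_two, h11] <;> ring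

theorem nfrob_eq_one_iff {D : ℕ} (hD : D ≠ 0) (M : Matrix (Fin D) (Fin D) ℂ) :
    nfrob M = 1 ↔ ((Mᴴ * M).trace).re = D := by
  rw [nfrob, Real.sqrt_eq_one, div_eq_one_iff_eq (Nat.cast_ne_zero.mpr hD)]

theorem Matrix.IsHermitian.mul_self_eq_one {H : Matrix (Fin 2) (Fin 2) ℂ} (hH : H.IsHermitian)
    (htr : H.trace = 0) (hnf : nfrob H = 1) : H * H = 1 := by
  have hre : ((H * H).trace).re = 2 := by
    rw [nfrob_eq_one_iff two_ne_zero, hH.eq] at hnf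
    exact_mod_cast hnf
  have hself : star (H * H).trace = (H * H).trace := by
    rw [← trace_conjTranspose, conjTranspose_mul, hH.eq]
  have htr2 : (H * H).trace = 2 := by
    rw [← Complex.conj_eq_iff_re.mp hself, hre]; norm_num
  have hsq := mul_self_eq_neg_det_smul_one_of_trace_eq_zero htr
  rw [hsq, trace_smul, trace_one, Fintype.card_fin, smul_eq_mul] at htr2
  rw [hsq, show -H.det = 1 by linear_combination htr2 / 2, one_smul]

theorem star_mulVec_dotProduct_mulVec_of_mem_unitaryGroup {n : Type*} [Fintype n]
    [DecidableEq n] {U : Matrix n n ℂ} (hU : U ∈ unitaryGroup n ℂ) (v : n → ℂ) :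
    star (U *ᵥ v) ⬝ᵥ U *ᵥ v = star v ⬝ᵥ v := by
  rw [star_mulVec, dotProduct_mulVec, vecMul_vecMul, ← star_eq_conjTranspose,
    mem_unitaryGroup_iff'.mp hU, vecMul_one]

theorem star_dotProduct_mul_vecMulVec_mul_conjTranspose_mulVec {n : Type*} [Fintype n]
    (A : Matrix n n ℂ) (x y : n → ℂ) :
    star x ⬝ᵥ (A * vecMulVec y (star y) * Aᴴ) *ᵥ x = (‖star x ⬝ᵥ A *ᵥ y‖ ^ 2 : ℝ) := by
  rw [mul_vecMulVec, vecMulVec_mul, ← star_mulVec, vecMulVec_mulVec, op_smul_eq_smul,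
    dotProduct_smul, star_dotProduct, smul_eq_mul, Complex.star_def, Complex.ofReal_pow,
    Complex.conj_mul']

open scoped ComplexOrder in
theorem eq_smul_of_norm_star_dotProduct_eq_one {n : Type*} [Fintype n] {u v : n → ℂ}
    (hu : star u ⬝ᵥ u = 1) (hv : star v ⬝ᵥ v = 1) (h : ‖star v ⬝ᵥ u‖ = 1) :
    u = (star v ⬝ᵥ u) • v := by
  set z := star v ⬝ᵥ u
  have hz : star z * z = 1 := by
    rw [Complex.star_def, Complex.conj_mul', h]; norm_num
  have hvu : star u ⬝ᵥ v = star z := by rw [star_dotProduct]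
  rw [← sub_eq_zero, ← dotProduct_star_self_eq_zero, star_sub, star_smul, sub_dotProduct,
    dotProduct_sub, dotProduct_sub, smul_dotProduct, smul_dotProduct, dotProduct_smul,
    dotProduct_smul, hu, hv, hvu]
  simp only [smul_eq_mul]
  linear_combination -hz

theorem Complex.exists_norm_eq_one_star_mul_eq_norm (z : ℂ) :
    ∃ p : ℂ, ‖p‖ = 1 ∧ star p * z = ‖z‖ := by
  set p := Complex.exp (z.arg * Complex.I)
  have hp : ‖p‖ = 1 := Complex.norm_exp_ofReal_mul_I _
  refine ⟨p, hp, ?_⟩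
  calc star p * z = ‖z‖ * (star p * p) := by
        rw [← congrArg (star p * ·) (Complex.norm_mul_exp_arg_mul_I z)]; ring
    _ = ‖z‖ := by rw [Complex.star_def, Complex.conj_mul', hp]; norm_num

theorem Real.arccos_le_of_cos_le {x θ : ℝ} (hθ : 0 ≤ θ) (h : Real.cos θ ≤ x) :
    Real.arccos x ≤ θ := by
  rcases le_or_gt θ Real.pi with hπ | hπ
  · calc Real.arccos x ≤ Real.arccos (Real.cos θ) := Real.antitone_arccos h
      _ = θ := Real.arccos_cos hθ hπ
  · exact (Real.arccos_le_pi x).trans hπ.le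

theorem star_dotProduct_evol_mul_vecMulVec_mul_evol_neg_mulVec_eq_one_iff {D : ℕ}
    {H : Matrix (Fin D) (Fin D) ℂ} (hH : H.IsHermitian) (ψi ψt : Fin D → ℂ) (θ : ℝ) :
    star ψt ⬝ᵥ (evol H θ * vecMulVec ψi (star ψi) * evol H (-θ)) *ᵥ ψt = 1 ↔
      ‖star ψt ⬝ᵥ evol H θ *ᵥ ψi‖ = 1 := by
  rw [← conjTranspose_evol hH, star_dotProduct_mul_vecMulVec_mul_conjTranspose_mulVec]
  norm_cast
  exact pow_eq_one_iff_of_nonneg (norm_nonneg _) two_ne_zero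

theorem arccos_le_of_norm_star_dotProduct_evol_mulVec_eq_one {H : Matrix (Fin 2) (Fin 2) ℂ}
    (hH : H.IsHermitian) (htr : H.trace = 0) (hnf : nfrob H = 1) {ψi ψt : Fin 2 → ℂ}
    (hψi : star ψi ⬝ᵥ ψi = 1) (hψt : star ψt ⬝ᵥ ψt = 1) {θ : ℝ} (hθ : 0 ≤ θ)
    (hreach : ‖star ψt ⬝ᵥ evol H θ *ᵥ ψi‖ = 1) :
    Real.arccos ‖star ψt ⬝ᵥ ψi‖ ≤ θ := by
  have hH2 := hH.mul_self_eq_one htr hnf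
  have hunit := (star_mulVec_dotProduct_mulVec_of_mem_unitaryGroup
    (evol_mem_unitaryGroup hH θ) ψi).trans hψi
  have hparallel := eq_smul_of_norm_star_dotProduct_eq_one hunit hψt hreach
  refine Real.arccos_le_of_cos_le hθ ?_
  calc Real.cos θ = (star ψi ⬝ᵥ evol H θ *ᵥ ψi).re :=
        (re_star_dotProduct_evol_mulVec hH hH2 hψi θ).symm
    _ ≤ ‖star ψi ⬝ᵥ evol H θ *ᵥ ψi‖ := Complex.re_le_norm _
    _ = ‖star ψt ⬝ᵥ ψi‖ := by
        rw [hparallel, dotProduct_smul, smul_eq_mul, norm_mul, hreach, one_mul,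
          star_dotProduct, norm_star]

noncomputable def rotationGenerator {n : Type*} (a b : n → ℂ) : Matrix n n ℂ :=
  Complex.I • (vecMulVec b (star a) - vecMulVec a (star b))

theorem isHermitian_rotationGenerator {n : Type*} (a b : n → ℂ) :
    (rotationGenerator a b).IsHermitian := by
  rw [IsHermitian, rotationGenerator, conjTranspose_smul, conjTranspose_sub,
    conjTranspose_vecMulVec, conjTranspose_vecMulVec, star_star, star_star, Complex.star_def,
    Complex.conj_I, neg_smul, ← smul_neg, neg_sub]

section rotationGenerator

variable {n : Type*} [Fintype n] {a b : n → ℂ}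

theorem trace_rotationGenerator (hab : star a ⬝ᵥ b = 0) : (rotationGenerator a b).trace = 0 := by
  have hba : star b ⬝ᵥ a = 0 := by rw [star_dotProduct, hab, star_zero]
  rw [rotationGenerator, trace_smul, trace_sub, trace_vecMulVec, trace_vecMulVec,
    dotProduct_comm, hab, dotProduct_comm, hba, sub_zero, smul_zero]

theorem rotationGenerator_mul_self (ha : star a ⬝ᵥ a = 1) (hb : star b ⬝ᵥ b = 1)
    (hab : star a ⬝ᵥ b = 0) :
    rotationGenerator a b * rotationGenerator a b =
      vecMulVec a (star a) + vecMulVec b (star b) := by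
  have hba : star b ⬝ᵥ a = 0 := by rw [star_dotProduct, hab, star_zero]
  rw [rotationGenerator, smul_mul_smul_comm, Complex.I_mul_I, sub_mul, mul_sub, mul_sub,
    vecMulVec_mul_vecMulVec, vecMulVec_mul_vecMulVec, vecMulVec_mul_vecMulVec,
    vecMulVec_mul_vecMulVec, ha, hb, hab, hba]
  simp only [zero_smul, one_smul, vecMulVec_zero]
  module

theorem rotationGenerator_mulVec (ha : star a ⬝ᵥ a = 1) (hab : star a ⬝ᵥ b = 0) :
    rotationGenerator a b *ᵥ a = Complex.I • b := by
  have hba : star b ⬝ᵥ a = 0 := by rw [star_dotProduct, hab, star_zero]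
  rw [rotationGenerator, smul_mulVec, sub_mulVec, vecMulVec_mulVec, vecMulVec_mulVec, ha, hba]
  simp

theorem exists_orthonormal_cos_smul_add_sin_smul_eq {w : n → ℂ} (ha : star a ⬝ᵥ a = 1)
    (hw : star w ⬝ᵥ w = 1) {θ : ℝ} (hcos : star w ⬝ᵥ a = Real.cos θ) (hsin : Real.sin θ ≠ 0) :
    ∃ b, star a ⬝ᵥ b = 0 ∧ star b ⬝ᵥ b = 1 ∧
      (Real.cos θ : ℂ) • a + (Real.sin θ : ℂ) • b = w := by
  have hs : (Real.sin θ : ℂ) ≠ 0 := Complex.ofReal_ne_zero.mpr hsin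
  have haw : star a ⬝ᵥ w = Real.cos θ := by
    rw [star_dotProduct, hcos, Complex.star_def, Complex.conj_ofReal]
  have hpyth : (Real.cos θ : ℂ) ^ 2 + (Real.sin θ : ℂ) ^ 2 = 1 := by
    exact_mod_cast Real.cos_sq_add_sin_sq θ
  refine ⟨(Real.sin θ : ℂ)⁻¹ • (w - (Real.cos θ : ℂ) • a), ?_, ?_, ?_⟩
  · rw [dotProduct_smul, dotProduct_sub, dotProduct_smul, haw, ha]
    simp
  · rw [star_smul, smul_dotProduct, dotProduct_smul, star_sub, star_smul, sub_dotProduct,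
      dotProduct_sub, dotProduct_sub, smul_dotProduct, smul_dotProduct, dotProduct_smul,
      dotProduct_smul, ha, hw, hcos, haw]
    simp only [smul_eq_mul, Complex.star_def, map_inv₀, Complex.conj_ofReal]
    field_simp
    linear_combination -hpyth
  · rw [smul_smul, mul_inv_cancel₀ hs, one_smul]
    module

end rotationGenerator

section rotationGenerator_two

variable {a b : Fin 2 → ℂ}

theorem nfrob_rotationGenerator (ha : star a ⬝ᵥ a = 1) (hb : star b ⬝ᵥ b = 1)
    (hab : star a ⬝ᵥ b = 0) : nfrob (rotationGenerator a b) = 1 := by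
  rw [nfrob_eq_one_iff two_ne_zero, (isHermitian_rotationGenerator a b).eq,
    rotationGenerator_mul_self ha hb hab, trace_add, trace_vecMulVec, trace_vecMulVec,
    dotProduct_comm, ha, dotProduct_comm, hb]
  norm_num

theorem evol_rotationGenerator_mulVec (ha : star a ⬝ᵥ a = 1) (hb : star b ⬝ᵥ b = 1)
    (hab : star a ⬝ᵥ b = 0) (t : ℝ) :
    evol (rotationGenerator a b) t *ᵥ a = (Real.cos t : ℂ) • a + (Real.sin t : ℂ) • b := by
  have hH2 := (isHermitian_rotationGenerator a b).mul_self_eq_one (trace_rotationGenerator hab)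
    (nfrob_rotationGenerator ha hb hab)
  rw [evol_eq_of_mul_self_eq_one hH2, sub_mulVec, smul_mulVec, smul_mulVec, one_mulVec,
    rotationGenerator_mulVec ha hab, smul_smul, mul_assoc, Complex.I_mul_I]
  module

end rotationGenerator_two

theorem exists_control_norm_star_dotProduct_evol_arccos_mulVec_eq_one {ψi ψt : Fin 2 → ℂ}
    (hψi : star ψi ⬝ᵥ ψi = 1) (hψt : star ψt ⬝ᵥ ψt = 1) (hover : ‖star ψt ⬝ᵥ ψi‖ < 1) :
    ∃ H : Matrix (Fin 2) (Fin 2) ℂ, H.IsHermitian ∧ H.trace = 0 ∧ nfrob H = 1 ∧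
      ‖star ψt ⬝ᵥ evol H (Real.arccos ‖star ψt ⬝ᵥ ψi‖) *ᵥ ψi‖ = 1 := by
  set α := Real.arccos ‖star ψt ⬝ᵥ ψi‖
  have hR0 := norm_nonneg (star ψt ⬝ᵥ ψi)
  obtain ⟨p, hp, hpc⟩ := Complex.exists_norm_eq_one_star_mul_eq_norm (star ψt ⬝ᵥ ψi)
  have hsin : Real.sin α ≠ 0 := (Real.sin_pos_of_pos_of_lt_pi (Real.arccos_pos.mpr hover)
    (Real.arccos_lt_pi.mpr (by linarith))).ne'
  have hcos : star (p • ψt) ⬝ᵥ ψi = Real.cos α := by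
    rw [Real.cos_arccos (by linarith) hover.le, star_smul, smul_dotProduct, smul_eq_mul, hpc]
  have hw : star (p • ψt) ⬝ᵥ (p • ψt) = 1 := by
    rw [star_smul, smul_dotProduct, dotProduct_smul, hψt, smul_eq_mul, smul_eq_mul, mul_one,
      Complex.star_def, Complex.conj_mul', hp]
    norm_num
  obtain ⟨b, hib, hb, hrot⟩ := exists_orthonormal_cos_smul_add_sin_smul_eq hψi hw hcos hsin
  refine ⟨rotationGenerator ψi b, isHermitian_rotationGenerator ψi b,
    trace_rotationGenerator hib, nfrob_rotationGenerator hψi hb hib, ?_⟩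
  rw [evol_rotationGenerator_mulVec hψi hb hib, hrot, dotProduct_smul, hψt, smul_eq_mul, mul_one,
    hp]

/-- Minimum time to drive a two-level pure state to a target pure state under
bounded traceless control: `T* = ω⁻¹ arccos|⟨ψ_t|ψ_i⟩|`. -/
theorem stmt_18 (ψi ψt : Fin 2 → ℂ)
    (hψi : star ψi ⬝ᵥ ψi = 1) (hψt : star ψt ⬝ᵥ ψt = 1)
    (hover : ‖star ψt ⬝ᵥ ψi‖ < 1)
    (ω : ℝ) (hω : 0 < ω) :
    IsLeast {T : ℝ | 0 ≤ T ∧ ∃ H : Matrix (Fin 2) (Fin 2) ℂ, H.IsHermitian ∧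
        H.trace = 0 ∧ nfrob H = 1 ∧
        star ψt ⬝ᵥ (evol H (ω * T) * Matrix.vecMulVec ψi (star ψi) *
          evol H (-(ω * T))) *ᵥ ψt = 1}
      (ω⁻¹ * Real.arccos ‖star ψt ⬝ᵥ ψi‖) := by
  refine ⟨⟨mul_nonneg (inv_nonneg.mpr hω.le) (Real.arccos_nonneg _), ?_⟩, ?_⟩
  · obtain ⟨H, hH, htr, hnf, hreach⟩ :=
      exists_control_norm_star_dotProduct_evol_arccos_mulVec_eq_one hψi hψt hover
    refine ⟨H, hH, htr, hnf, ?_⟩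
    rwa [star_dotProduct_evol_mul_vecMulVec_mul_evol_neg_mulVec_eq_one_iff hH,
      mul_inv_cancel_left₀ hω.ne']
  · rintro T ⟨hT, H, hH, htr, hnf, hreach⟩
    rw [star_dotProduct_evol_mul_vecMulVec_mul_evol_neg_mulVec_eq_one_iff hH] at hreach
    rw [inv_mul_le_iff₀ hω]
    exact arccos_le_of_norm_star_dotProduct_evol_mulVec_eq_one hH htr hnf hψi hψt
      (by positivity) hreach
end

section
/- Let ρ^i and H^f be Hermitian operators on a D-dimensional Hilbert space with spectral decompositions ρ^i = ∑_n q_n |q_n⟩⟨q_n| (q₁ ≥ … ≥ q_D) and H^f = ∑_n E_n |E_n⟩⟨E_n| (E₁ ≤ … ≤ E_D). Then for every unitary U, Tr(H^f U ρ^i U†) ≥ ∑_n q_n E_n, with equality attained by the unitary mapping |q_n⟩ to |E_n⟩. Equivalently, the ergotropy W_erg = Tr(H^f ρ^i) − ∑_n q_n E_n is the maximum of −Tr(H^f Uρ^i U†) + Tr(H^f ρ^i) over all unitaries U. -/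
/-!
Write `ρ = V_e diag(q) V_e†` and `H^f = V_f diag(E) V_f†` with unitary `V_e, V_f`. For unitary `U`,
cyclicity of the trace gives `Tr(H^f UρU†) = ∑_{m,n} E_m q_n |W_{mn}|²` with `W = V_f† U V_e`
unitary, so `(|W_{mn}|²)` is doubly stochastic. By Birkhoff's theorem this linear functional is
minimised at a permutation matrix, where the rearrangement inequality for the oppositely ordered
`q` and `E` bounds it below by `∑ q_n E_n`; `W = 1`, i.e. `U = V_f V_e†`, attains the bound.
-/

open Matrix

section Rearrangement

variable {R ι : Type*} [Field R] [LinearOrder R] [IsStrictOrderedRing R]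
  [Fintype ι] [DecidableEq ι]

-- By Birkhoff's theorem it suffices to treat permutation matrices, as the right side is
-- linear in `M`.
theorem Antivary.dotProduct_le_mulVec_dotProduct {q E : ι → R} (h : Antivary q E)
    {M : Matrix ι ι R} (hM : M ∈ doublyStochastic R ι) :
    q ⬝ᵥ E ≤ (M *ᵥ q) ⬝ᵥ E := by
  have hlin : IsLinearMap R fun A : Matrix ι ι R => (A *ᵥ q) ⬝ᵥ E :=
    ⟨fun A B => by simp only [add_mulVec, add_dotProduct],
     fun c A => by simp only [smul_mulVec, smul_dotProduct]⟩
  have hperm : {A | ∃ σ : Equiv.Perm ι, σ.permMatrix R = A} ⊆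
      {A : Matrix ι ι R | q ⬝ᵥ E ≤ (A *ᵥ q) ⬝ᵥ E} := by
    rintro _ ⟨σ, rfl⟩
    rw [Set.mem_ofPred_eq, permMatrix_mulVec]
    exact h.sum_mul_le_sum_comp_perm_mul
  rw [← SetLike.mem_coe, doublyStochastic_eq_convexHull_permMatrix] at hM
  exact convexHull_min hperm (convex_halfSpace_ge hlin _) hM

end Rearrangement

section Unitary

theorem sum_smul_vecMulVec_star {ι κ α : Type*} [Fintype κ] [DecidableEq κ] [CommSemiring α]
    [StarRing α] (d : κ → α) (e : κ → ι → α) :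
    ∑ n, d n • vecMulVec (e n) (star (e n)) = (of e)ᵀ * diagonal d * (of e)ᵀᴴ := by
  ext i j
  simp [Matrix.sum_apply, mul_apply, diagonal_apply, vecMulVec_apply, mul_assoc, mul_left_comm]

variable {ι : Type*} [Fintype ι]

theorem trace_conj_mul_conj {α : Type*} [CommSemiring α] [StarRing α]
    (V A U V' B : Matrix ι ι α) :
    trace (V * A * Vᴴ * (U * (V' * B * V'ᴴ) * Uᴴ)) =
      trace (A * (Vᴴ * U * V') * B * (Vᴴ * U * V')ᴴ) := by
  rw [Matrix.mul_assoc, Matrix.mul_assoc, trace_mul_comm]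
  simp only [conjTranspose_mul, conjTranspose_conjTranspose, Matrix.mul_assoc]

variable [DecidableEq ι]

theorem transpose_of_mem_unitaryGroup_of_orthonormal {α : Type*} [CommRing α] [StarRing α]
    {e : ι → ι → α}
    (he : ∀ i j, star (e i) ⬝ᵥ e j = if i = j then 1 else 0) :
    (of e)ᵀ ∈ unitaryGroup ι α := by
  rw [mem_unitaryGroup_iff']
  ext i j
  simpa [mul_apply, dotProduct, one_apply] using he i j

def entrywiseNormSq (W : Matrix ι ι ℂ) : Matrix ι ι ℝ :=
  of fun i j => Complex.normSq (W i j)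

theorem entrywiseNormSq_mem_doublyStochastic {W : Matrix ι ι ℂ}
    (hW : W ∈ unitaryGroup ι ℂ) : entrywiseNormSq W ∈ doublyStochastic ℝ ι := by
  rw [mem_doublyStochastic_iff_sum]
  refine ⟨fun i j => Complex.normSq_nonneg _, fun i => ?_, fun j => ?_⟩
  · have := congr_fun₂ (mem_unitaryGroup_iff.mp hW) i i
    simp only [mul_apply, star_apply, one_apply_eq, Complex.star_def, Complex.mul_conj] at this
    exact_mod_cast this
  · have := congr_fun₂ (mem_unitaryGroup_iff'.mp hW) j j
    simp only [mul_apply, star_apply, one_apply_eq, Complex.star_def,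
      ← Complex.normSq_eq_conj_mul_self] at this
    exact_mod_cast this

theorem trace_diagonal_mul_mul_diagonal_mul_conjTranspose (a b : ι → ℝ) (W : Matrix ι ι ℂ) :
    trace (diagonal (fun i => (a i : ℂ)) * W * diagonal (fun j => (b j : ℂ)) * Wᴴ) =
      ((entrywiseNormSq W *ᵥ b) ⬝ᵥ a : ℝ) := by
  simp only [trace, diag, mul_apply, diagonal_apply, ite_mul, mul_ite, zero_mul, mul_zero,
    Finset.sum_ite_eq, Finset.sum_ite_eq', Finset.mem_univ, if_true, conjTranspose_apply,
    entrywiseNormSq, mulVec, dotProduct, of_apply, Complex.ofReal_sum, Complex.ofReal_mul,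
    Finset.sum_mul]
  refine Finset.sum_congr rfl fun i _ => Finset.sum_congr rfl fun j _ => ?_
  rw [Complex.normSq_eq_conj_mul_self, Complex.star_def]
  ring

variable {Ve Vf : Matrix ι ι ℂ} {q E : ι → ℝ}

theorem dotProduct_le_re_trace_mul_conj (h : Antivary q E) (hVe : Ve ∈ unitaryGroup ι ℂ)
    (hVf : Vf ∈ unitaryGroup ι ℂ) {U : Matrix ι ι ℂ} (hU : U ∈ unitaryGroup ι ℂ) :
    q ⬝ᵥ E ≤ (trace (Vf * diagonal (fun n => (E n : ℂ)) * Vfᴴ *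
      (U * (Ve * diagonal (fun n => (q n : ℂ)) * Veᴴ) * Uᴴ))).re := by
  have hW : Vfᴴ * U * Ve ∈ unitaryGroup ι ℂ :=
    mul_mem (mul_mem (Unitary.star_mem hVf) hU) hVe
  rw [trace_conj_mul_conj, trace_diagonal_mul_mul_diagonal_mul_conjTranspose,
    Complex.ofReal_re]
  exact h.dotProduct_le_mulVec_dotProduct (entrywiseNormSq_mem_doublyStochastic hW)

theorem re_trace_mul_conj_eq_dotProduct (hVe : Ve ∈ unitaryGroup ι ℂ)
    (hVf : Vf ∈ unitaryGroup ι ℂ) :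
    (trace (Vf * diagonal (fun n => (E n : ℂ)) * Vfᴴ *
      (Vf * Veᴴ * (Ve * diagonal (fun n => (q n : ℂ)) * Veᴴ) * (Vf * Veᴴ)ᴴ))).re =
      q ⬝ᵥ E := by
  have hW : Vfᴴ * (Vf * Veᴴ) * Ve = 1 := by
    rw [Matrix.mul_assoc, Matrix.mul_assoc, ← star_eq_conjTranspose, ← star_eq_conjTranspose,
      Unitary.star_mul_self_of_mem hVe, Matrix.mul_one, Unitary.star_mul_self_of_mem hVf]
  rw [trace_conj_mul_conj, hW, conjTranspose_one, Matrix.mul_one, Matrix.mul_one,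
    diagonal_mul_diagonal, trace_diagonal]
  simp [dotProduct, mul_comm]

end Unitary

theorem stmt_19_general (D : ℕ) (q E : Fin D → ℝ)
    (hq : Antitone q)
    (hE : Monotone E)
    (e f : Fin D → Fin D → ℂ)
    (he : ∀ i j, star (e i) ⬝ᵥ e j = if i = j then 1 else 0)
    (hf : ∀ i j, star (f i) ⬝ᵥ f j = if i = j then 1 else 0)
    (ρ Hf : Matrix (Fin D) (Fin D) ℂ)
    (hρ : ρ = ∑ n, (q n : ℂ) • Matrix.vecMulVec (e n) (star (e n)))
    (hHf : Hf = ∑ n, (E n : ℂ) • Matrix.vecMulVec (f n) (star (f n))) :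
    (∀ U ∈ Matrix.unitaryGroup (Fin D) ℂ,
        (∑ n, q n * E n) ≤ ((Hf * (U * ρ * Uᴴ)).trace).re) ∧
    (∃ U ∈ Matrix.unitaryGroup (Fin D) ℂ,
        ((Hf * (U * ρ * Uᴴ)).trace).re = ∑ n, q n * E n) ∧
    IsGreatest {w : ℝ | ∃ U ∈ Matrix.unitaryGroup (Fin D) ℂ,
        w = -((Hf * (U * ρ * Uᴴ)).trace).re + ((Hf * ρ).trace).re}
      (((Hf * ρ).trace).re - ∑ n, q n * E n) := by
  have hVe := transpose_of_mem_unitaryGroup_of_orthonormal he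
  have hVf := transpose_of_mem_unitaryGroup_of_orthonormal hf
  rw [sum_smul_vecMulVec_star] at hρ hHf
  subst hρ hHf
  rw [show ∑ n, q n * E n = q ⬝ᵥ E from rfl]
  have hU₀ : (of f)ᵀ * (of e)ᵀᴴ ∈ unitaryGroup (Fin D) ℂ :=
    mul_mem hVf (Unitary.star_mem hVe)
  have lower := fun U (hU : U ∈ unitaryGroup (Fin D) ℂ) =>
    dotProduct_le_re_trace_mul_conj (hq.antivary hE) hVe hVf hU
  have attained := re_trace_mul_conj_eq_dotProduct (q := q) (E := E) hVe hVf
  refine ⟨lower, ⟨_, hU₀, attained⟩, ⟨_, hU₀, by rw [attained]; ring⟩, ?_⟩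
  rintro w ⟨U, hU, rfl⟩
  linarith [lower U hU]

/-- Ergotropy as the unconstrained maximum extractable work: for
`ρ^i = ∑ q_n |q_n⟩⟨q_n|` (`q` decreasing) and `H^f = ∑ E_n |E_n⟩⟨E_n|`
(`E` increasing), every unitary satisfies `Tr(H^f UρU†) ≥ ∑ q_n E_n`, equality
is attained, and the ergotropy `Tr(H^f ρ^i) - ∑ q_n E_n` is the maximum of the
extracted work over all unitaries. -/
theorem stmt_19 (D : ℕ) (q E : Fin D → ℝ)
    (hq : Antitone q) (hq0 : ∀ n, 0 ≤ q n) (hq1 : ∑ n, q n = 1)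
    (hE : Monotone E)
    (e f : Fin D → Fin D → ℂ)
    (he : ∀ i j, star (e i) ⬝ᵥ e j = if i = j then 1 else 0)
    (hf : ∀ i j, star (f i) ⬝ᵥ f j = if i = j then 1 else 0)
    (ρ Hf : Matrix (Fin D) (Fin D) ℂ)
    (hρ : ρ = ∑ n, (q n : ℂ) • Matrix.vecMulVec (e n) (star (e n)))
    (hHf : Hf = ∑ n, (E n : ℂ) • Matrix.vecMulVec (f n) (star (f n))) :
    (∀ U ∈ Matrix.unitaryGroup (Fin D) ℂ,
        (∑ n, q n * E n) ≤ ((Hf * (U * ρ * Uᴴ)).trace).re) ∧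
    (∃ U ∈ Matrix.unitaryGroup (Fin D) ℂ,
        ((Hf * (U * ρ * Uᴴ)).trace).re = ∑ n, q n * E n) ∧
    IsGreatest {w : ℝ | ∃ U ∈ Matrix.unitaryGroup (Fin D) ℂ,
        w = -((Hf * (U * ρ * Uᴴ)).trace).re + ((Hf * ρ).trace).re}
      (((Hf * ρ).trace).re - ∑ n, q n * E n) :=
  stmt_19_general D q E hq hE e f he hf ρ Hf hρ hHf
end
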